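/- Adversarial radius lower bound via confidence: let f: ℝᵈ → ℝⁿ be L-Lipschitz (with respect to the Euclidean norms), let x be classified as class o (i.e., f(x)_o > f(x)_{o'} for all o' ≠ o), and define the confidence φ(x) = min_{o' ≠ o} √2 · (f(x)_o − f(x)_{o'}). Then for any x' with f(x')_o ≤ f(x')_{o'} for some o' ≠ o (i.e., x' is classified differently), we have ‖x' − x‖ ≥ φ(x) / (2L). In particular, the adversarial radius ρ(x) = inf over such x' of ‖x' − x‖ is at least φ(x)/(2L). -/
import Mathlib

lemma coord_diff_le_sqrt_two_mul_norm {n : ℕ} (a : EuclideanSpace ℝ (Fin n))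
    (o o' : Fin n) (h : o ≠ o') : a o - a o' ≤ Real.sqrt 2 * ‖a‖ := by
  have hsum : (a o)^2 + (a o')^2 ≤ ‖a‖^2 := by
    have hnorm : ‖a‖^2 = ∑ i, (a i)^2 := by
      rw [EuclideanSpace.norm_eq, Real.sq_sqrt (by positivity)]
      simp [Real.norm_eq_abs, sq_abs]
    rw [hnorm]
    have : ∑ i ∈ ({o, o'} : Finset (Fin n)), (a i)^2 ≤ ∑ i, (a i)^2 :=
      Finset.sum_le_sum_of_subset_of_nonneg (Finset.subset_univ _)
        (fun i _ _ => sq_nonneg _)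
    rwa [Finset.sum_pair h] at this
  have hsq : (a o - a o')^2 ≤ 2 * ‖a‖^2 := by nlinarith [sq_nonneg (a o + a o')]
  calc a o - a o' ≤ |a o - a o'| := le_abs_self _
    _ = Real.sqrt ((a o - a o')^2) := (Real.sqrt_sq_eq_abs _).symm
    _ ≤ Real.sqrt (2 * ‖a‖^2) := Real.sqrt_le_sqrt hsq
    _ = Real.sqrt 2 * ‖a‖ := by
        rw [Real.sqrt_mul (by norm_num), Real.sqrt_sq (norm_nonneg _)]

/-- Adversarial radius lower bound via confidence: if `f` is `L`-Lipschitz,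
`x` is classified as `o`, and `x'` is classified differently (some other class
`o'` attains at least the score of `o`), then
`‖x' - x‖ ≥ φ(x) / (2L)` where `φ(x) = min_{o'' ≠ o} √2 * (f x o - f x o'')`.
Consequently the adversarial radius (infimum distance to differently classified
inputs) is at least `φ(x) / (2L)`. -/
theorem adv_radius_lower_bound_confidence (d n : ℕ) (hn : 2 ≤ n) (L : NNReal)
    (hL : 0 < (L : ℝ))
    (f : EuclideanSpace ℝ (Fin d) → EuclideanSpace ℝ (Fin n))
    (hf : LipschitzWith L f) (x : EuclideanSpace ℝ (Fin d)) (o : Fin n)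
    (hx : ∀ o' : Fin n, o' ≠ o → f x o' < f x o)
    (hne : (Finset.univ.erase o).Nonempty) :
    (∀ x' : EuclideanSpace ℝ (Fin d), (∃ o' : Fin n, o' ≠ o ∧ f x' o ≤ f x' o') →
      (Finset.univ.erase o).inf' hne
          (fun o'' : Fin n => Real.sqrt 2 * (f x o - f x o'')) / (2 * L) ≤
        ‖x' - x‖) ∧
    ({y : EuclideanSpace ℝ (Fin d) | ∃ o' : Fin n, o' ≠ o ∧ f y o ≤ f y o'}.Nonempty →
      (Finset.univ.erase o).inf' hne
          (fun o'' : Fin n => Real.sqrt 2 * (f x o - f x o'')) / (2 * L) ≤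
        Metric.infDist x
          {y : EuclideanSpace ℝ (Fin d) | ∃ o' : Fin n, o' ≠ o ∧ f y o ≤ f y o'}) := by
  have key : ∀ x' : EuclideanSpace ℝ (Fin d),
      (∃ o' : Fin n, o' ≠ o ∧ f x' o ≤ f x' o') →
      (Finset.univ.erase o).inf' hne
          (fun o'' : Fin n => Real.sqrt 2 * (f x o - f x o'')) / (2 * L) ≤
        ‖x' - x‖ := by
    intro x' ⟨o', ho', hle⟩
    have hinf : (Finset.univ.erase o).inf' hne
        (fun o'' : Fin n => Real.sqrt 2 * (f x o - f x o'')) ≤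
        Real.sqrt 2 * (f x o - f x o') :=
      Finset.inf'_le _ (Finset.mem_erase.mpr ⟨ho', Finset.mem_univ _⟩)
    -- f x o - f x o' ≤ (f x - f x') o - (f x - f x') o' ≤ √2 ‖f x - f x'‖ ≤ √2 L ‖x - x'‖
    set a : EuclideanSpace ℝ (Fin n) := f x - f x' with ha
    have hcoord : f x o - f x o' ≤ a o - a o' := by
      have : a o = f x o - f x' o := rfl
      have h2 : a o' = f x o' - f x' o' := rfl
      simp only [this, h2]; linarith
    have hcd : a o - a o' ≤ Real.sqrt 2 * ‖a‖ :=
      coord_diff_le_sqrt_two_mul_norm a o o' (fun h => ho' h.symm)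
    have hlip : ‖a‖ ≤ L * ‖x - x'‖ := by
      have := hf.dist_le_mul x x'
      rwa [dist_eq_norm, dist_eq_norm] at this
    have hchain : f x o - f x o' ≤ Real.sqrt 2 * (L * ‖x - x'‖) := by
      calc f x o - f x o' ≤ a o - a o' := hcoord
        _ ≤ Real.sqrt 2 * ‖a‖ := hcd
        _ ≤ Real.sqrt 2 * (L * ‖x - x'‖) := by
            exact mul_le_mul_of_nonneg_left hlip (Real.sqrt_nonneg 2)
    have hsq2 : Real.sqrt 2 * Real.sqrt 2 = 2 := Real.mul_self_sqrt (by norm_num)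
    have hfin : Real.sqrt 2 * (f x o - f x o') ≤ 2 * L * ‖x - x'‖ := by
      calc Real.sqrt 2 * (f x o - f x o')
          ≤ Real.sqrt 2 * (Real.sqrt 2 * (L * ‖x - x'‖)) :=
            mul_le_mul_of_nonneg_left hchain (Real.sqrt_nonneg 2)
        _ = 2 * L * ‖x - x'‖ := by rw [← mul_assoc, hsq2]; ring
    have hnorm_eq : ‖x - x'‖ = ‖x' - x‖ := norm_sub_rev _ _
    rw [div_le_iff₀ (by positivity)]
    have : (2:ℝ) * L * ‖x - x'‖ = ‖x' - x‖ * (2 * L) := by rw [hnorm_eq]; ring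
    linarith [hinf, hfin]
  refine ⟨key, fun hS => ?_⟩
  by_contra hcon
  rw [not_le, Metric.infDist_lt_iff hS] at hcon
  obtain ⟨y, hy, hlt⟩ := hcon
  have := key y hy
  rw [dist_eq_norm, norm_sub_rev] at hlt
  linarith
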